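/- In the Gale duality setup, a true maximal ψ-fan Σ consists entirely of simplicial ψ-cones if and only if the corresponding true maximal φ-bunch Σ^♯ consists entirely of φ-cones whose dimension equals dim K_ℚ. -/

import Mathlib

open Set

/-- The convex cone generated by a set `S`: all finite nonnegative combinations. -/
def coneHull (k : Type*) [Field k] [LinearOrder k] [IsStrictOrderedRing k] {W : Type*} [AddCommGroup W] [Module k W]
    (S : Set W) : Set W :=
  {x | ∃ (n : ℕ) (c : Fin n → k) (v : Fin n → W),
    (∀ i, 0 ≤ c i) ∧ (∀ i, v i ∈ S) ∧ x = ∑ i, c i • v i}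

/-- The relative interior of a convex cone `C` (algebraic characterization, valid over `ℚ`):
`x` lies in the relative interior iff `x ∈ C` and one can move from `x` a little bit
against any direction of `C` while staying in `C`. -/
def coneRelint (k : Type*) [Field k] [LinearOrder k] [IsStrictOrderedRing k] {W : Type*} [AddCommGroup W] [Module k W]
    (C : Set W) : Set W :=
  {x ∈ C | ∀ y ∈ C, ∃ ε : k, 0 < ε ∧ x - ε • y ∈ C}

/-- `F` is a face of the convex cone `C`. -/
def IsConeFace {W : Type*} [AddCommGroup W] (F C : Set W) : Prop :=
  F ⊆ C ∧ ∀ x ∈ C, ∀ y ∈ C, x + y ∈ F → x ∈ F ∧ y ∈ F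

section ConeHullBasic
variable {W : Type*} [AddCommGroup W] [Module ℚ W] {S T : Set W} {x y : W}

lemma mem_coneHull_of_mem (hx : x ∈ S) : x ∈ coneHull ℚ S :=
  ⟨1, fun _ => 1, fun _ => x, fun _ => zero_le_one, fun _ => hx, by simp⟩

lemma zero_mem_coneHull : (0 : W) ∈ coneHull ℚ S :=
  ⟨0, fun i => 1, fun i => i.elim0, fun i => zero_le_one, fun i => i.elim0, by simp⟩

lemma add_mem_coneHull (hx : x ∈ coneHull ℚ S) (hy : y ∈ coneHull ℚ S) :
    x + y ∈ coneHull ℚ S := by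
  obtain ⟨n, c, v, hc, hv, rfl⟩ := hx
  obtain ⟨m, d, w, hd, hw, rfl⟩ := hy
  refine ⟨n + m, Fin.append c d, Fin.append v w, ?_, ?_, ?_⟩
  · intro i
    induction i using Fin.addCases <;>
      simp [Fin.append_left, Fin.append_right, hc, hd]
  · intro i
    induction i using Fin.addCases <;>
      simp [Fin.append_left, Fin.append_right, hv, hw]
  · rw [Fin.sum_univ_add]
    simp [Fin.append_left, Fin.append_right]

lemma smul_mem_coneHull {t : ℚ} (ht : 0 ≤ t) (hx : x ∈ coneHull ℚ S) :
    t • x ∈ coneHull ℚ S := by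
  obtain ⟨n, c, v, hc, hv, rfl⟩ := hx
  exact ⟨n, fun i => t * c i, v, fun i => mul_nonneg ht (hc i),
    hv, by simp [Finset.smul_sum, mul_smul]⟩

lemma coneHull_mono (h : S ⊆ T) : coneHull ℚ S ⊆ coneHull ℚ T := by
  rintro x ⟨n, c, v, hc, hv, rfl⟩
  exact ⟨n, c, v, hc, fun i => h (hv i), rfl⟩

lemma sum_mem_coneHull {ι : Type*} (F : Finset ι) (f : ι → W)
    (h : ∀ i ∈ F, f i ∈ coneHull ℚ S) : ∑ i ∈ F, f i ∈ coneHull ℚ S := by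
  classical
  induction F using Finset.induction with
  | empty => simpa using (zero_mem_coneHull : (0:W) ∈ _)
  | insert a s hni ih =>
    rw [Finset.sum_insert hni]
    exact add_mem_coneHull (h _ (Finset.mem_insert_self _ _))
      (ih fun i hi => h i (Finset.mem_insert_of_mem hi))

lemma coneHull_subset (h : S ⊆ coneHull ℚ T) : coneHull ℚ S ⊆ coneHull ℚ T := by
  rintro x ⟨n, c, v, hc, hv, rfl⟩
  exact sum_mem_coneHull _ _ fun i _ => smul_mem_coneHull (hc i) (h (hv i))

lemma coneHull_subset_span : coneHull ℚ S ⊆ (Submodule.span ℚ S : Set W) := by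
  rintro x ⟨n, c, v, hc, hv, rfl⟩
  exact Submodule.sum_mem _ fun i _ =>
    Submodule.smul_mem _ _ (Submodule.subset_span (hv i))

lemma span_coneHull : Submodule.span ℚ (coneHull ℚ S) = Submodule.span ℚ S :=
  le_antisymm (Submodule.span_le.mpr coneHull_subset_span)
    (Submodule.span_mono fun x hx => mem_coneHull_of_mem hx)

lemma mem_coneHull_singleton {u : W} : x ∈ coneHull ℚ {u} ↔ ∃ t : ℚ, 0 ≤ t ∧ x = t • u := by
  constructor
  · rintro ⟨n, c, v, hc, hv, rfl⟩
    refine ⟨∑ i, c i, Finset.sum_nonneg fun i _ => hc i, ?_⟩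
    rw [Finset.sum_smul]
    exact Finset.sum_congr rfl fun i _ => by rw [hv i]
  · rintro ⟨t, ht, rfl⟩
    exact smul_mem_coneHull ht (mem_coneHull_of_mem rfl)

lemma coneHull_empty : coneHull ℚ (∅ : Set W) = {0} := by
  ext x
  simp only [Set.mem_singleton_iff]
  constructor
  · rintro ⟨n, c, v, hc, hv, rfl⟩
    rcases Nat.eq_zero_or_pos n with rfl | hn
    · simp
    · exact absurd (hv ⟨0, hn⟩) (Set.notMem_empty _)
  · rintro rfl; exact zero_mem_coneHull

lemma mem_coneHull_fintype {S : Set W} [Fintype S] :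
    x ∈ coneHull ℚ S ↔ ∃ c : S → ℚ, (∀ s, 0 ≤ c s) ∧ x = ∑ s : S, c s • (s : W) := by
  classical
  constructor
  · rintro ⟨n, c, v, hc, hv, rfl⟩
    refine ⟨fun s => ∑ i ∈ Finset.univ.filter (fun i => v i = (s : W)), c i,
      fun s => Finset.sum_nonneg fun i _ => hc i, ?_⟩
    have : ∀ s : S, (∑ i ∈ Finset.univ.filter (fun i => v i = (s : W)), c i) • (s : W)
        = ∑ i ∈ Finset.univ.filter (fun i => (⟨v i, hv i⟩ : S) = s), c i • v i := by
      intro s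
      rw [Finset.sum_smul]
      refine Finset.sum_congr ?_ fun i hi => ?_
      · apply Finset.filter_congr; intro i _
        simp [Subtype.ext_iff]
      · rw [Finset.mem_filter] at hi
        rw [← hi.2]
    rw [Finset.sum_congr rfl fun s _ => this s, Finset.sum_fiberwise]
  · rintro ⟨c, hc, rfl⟩
    exact sum_mem_coneHull _ _ fun s _ =>
      smul_mem_coneHull (hc s) (mem_coneHull_of_mem s.2)

lemma relint_ray {u : W} : u ∈ coneRelint ℚ (coneHull ℚ {u}) := by
  refine ⟨mem_coneHull_of_mem rfl, fun y hy => ?_⟩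
  rw [mem_coneHull_singleton] at hy
  obtain ⟨t, ht, rfl⟩ := hy
  refine ⟨1 / (t + 1), by positivity, ?_⟩
  rw [mem_coneHull_singleton]
  refine ⟨1 - (1 / (t+1)) * t, ?_, by rw [smul_smul, sub_smul, one_smul]⟩
  rw [sub_nonneg, div_mul_eq_mul_div, div_le_one (by positivity)]
  linarith

end ConeHullBasic
section Coord
variable {W : Type*} [AddCommGroup W] [Module ℚ W] {S S' : Set W} {x y : W}

lemma exists_coord (hS : LinearIndependent ℚ (fun x : S => (x : W))) :
    ∃ f : S → (W →ₗ[ℚ] ℚ), (∀ s : S, f s (s : W) = 1) ∧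
      (∀ s t : S, (t : W) ≠ (s : W) → f s (t : W) = 0) := by
  classical
  replace hS : LinearIndepOn ℚ id S := hS
  refine ⟨fun s => (Module.Basis.extend hS).coord ⟨(s : W), hS.subset_extend _ s.2⟩, ?_, ?_⟩
  · intro s
    set j : hS.extend (Set.subset_univ S) := ⟨(s : W), hS.subset_extend _ s.2⟩ with hj
    have hs : (s : W) = Module.Basis.extend hS j := (Module.Basis.extend_apply_self hS j).symm
    rw [Module.Basis.coord_apply]
    nth_rewrite 1 [hs]
    rw [Module.Basis.repr_self, Finsupp.single_apply]
    simp [hj]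
  · intro s t hne
    set js : hS.extend (Set.subset_univ S) := ⟨(s : W), hS.subset_extend _ s.2⟩ with hjs
    set jt : hS.extend (Set.subset_univ S) := ⟨(t : W), hS.subset_extend _ t.2⟩ with hjt
    have ht : (t : W) = Module.Basis.extend hS jt := (Module.Basis.extend_apply_self hS jt).symm
    rw [Module.Basis.coord_apply, ht, Module.Basis.repr_self, Finsupp.single_apply]
    have : jt ≠ js := fun h => hne (Subtype.mk_eq_mk.mp (hjt ▸ hjs ▸ h))
    simp [this, ← hjs]

variable {f : S → (W →ₗ[ℚ] ℚ)}
  (hf1 : ∀ s : S, f s (s : W) = 1)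
  (hf0 : ∀ s t : S, (t : W) ≠ (s : W) → f s (t : W) = 0)

include hf1 hf0

lemma coord_nonneg (hx : x ∈ coneHull ℚ S) (s : S) : 0 ≤ f s x := by
  obtain ⟨n, c, v, hc, hv, rfl⟩ := hx
  rw [map_sum]
  refine Finset.sum_nonneg fun i _ => ?_
  rw [map_smul, smul_eq_mul]
  by_cases h : v i = (s : W)
  · rw [show f s (v i) = f s ((⟨v i, hv i⟩ : S) : W) from rfl]
    rw [show ((⟨v i, hv i⟩ : S) : W) = (s : W) from h, hf1 s]
    simpa using hc i
  · rw [hf0 s ⟨v i, hv i⟩ h, mul_zero]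

omit hf1 in
lemma coord_zero_of_subset (hS' : S' ⊆ S) (hx : x ∈ coneHull ℚ S') (s : S)
    (hs : (s : W) ∉ S') : f s x = 0 := by
  obtain ⟨n, c, v, hc, hv, rfl⟩ := hx
  rw [map_sum]
  refine Finset.sum_eq_zero fun i _ => ?_
  rw [map_smul, smul_eq_mul]
  have hne : v i ≠ (s : W) := fun h => hs (h ▸ hv i)
  rw [hf0 s ⟨v i, hS' (hv i)⟩ hne, mul_zero]

lemma coord_repr [Fintype S] (hx : x ∈ coneHull ℚ S) :
    x = ∑ s : S, f s x • (s : W) := by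
  classical
  rw [mem_coneHull_fintype] at hx
  obtain ⟨c, hc, hx⟩ := hx
  rw [hx]
  refine Finset.sum_congr rfl fun t _ => ?_
  congr 1
  rw [map_sum]
  rw [Finset.sum_eq_single t]
  · rw [map_smul, smul_eq_mul, hf1 t, mul_one]
  · intro s _ hst
    rw [map_smul, smul_eq_mul, hf0 t s (fun h => hst (Subtype.ext h)), mul_zero]
  · intro h
    exact absurd (Finset.mem_univ t) h

end Coord

section Face
variable {W : Type*} [AddCommGroup W] [Module ℚ W] [FiniteDimensional ℚ W]
  {S S' : Set W} {x y : W}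

lemma mem_coneHull_sub_of_add (hS : LinearIndependent ℚ (fun x : S => (x : W)))
    (hS' : S' ⊆ S) (hx : x ∈ coneHull ℚ S) (hy : y ∈ coneHull ℚ S)
    (hxy : x + y ∈ coneHull ℚ S') : x ∈ coneHull ℚ S' := by
  classical
  have : Fintype S := hS.setFinite.fintype
  obtain ⟨f, hf1, hf0⟩ := exists_coord hS
  have hzero : ∀ s : S, (s : W) ∉ S' → f s x = 0 := by
    intro s hs
    have h1 : 0 ≤ f s x := coord_nonneg hf1 hf0 hx s
    have h2 : 0 ≤ f s y := coord_nonneg hf1 hf0 hy s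
    have h3 : f s x + f s y = 0 := by
      rw [← map_add]
      exact coord_zero_of_subset hf0 hS' hxy s hs
    linarith
  have hrepr := coord_repr hf1 hf0 hx
  have hfilter : x = ∑ s ∈ Finset.univ.filter (fun s : S => (s : W) ∈ S'),
      f s x • (s : W) := by
    conv_lhs => rw [hrepr]
    refine (Finset.sum_filter_of_ne ?_).symm
    intro s _ hne
    by_contra hs
    exact hne (by rw [hzero s hs, zero_smul])
  rw [hfilter]
  exact sum_mem_coneHull _ _ fun s hs => by
    rw [Finset.mem_filter] at hs
    exact smul_mem_coneHull (coord_nonneg hf1 hf0 hx s) (mem_coneHull_of_mem hs.2)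

lemma isConeFace_coneHull (hS : LinearIndependent ℚ (fun x : S => (x : W)))
    (hS' : S' ⊆ S) : IsConeFace (coneHull ℚ S') (coneHull ℚ S) := by
  refine ⟨coneHull_mono hS', fun x hx y hy hxy => ?_⟩
  exact ⟨mem_coneHull_sub_of_add hS hS' hx hy hxy,
    mem_coneHull_sub_of_add hS hS' hy hx (by rwa [add_comm])⟩

omit [FiniteDimensional ℚ W] in
lemma term_mem_of_isConeFace {F C : Set W} {G : Set W} (hF : IsConeFace F C)
    (hC : C = coneHull ℚ G) {n : ℕ} {c : Fin n → ℚ} {v : Fin n → W}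
    (hc : ∀ i, 0 ≤ c i) (hv : ∀ i, v i ∈ G)
    (hx : ∑ i, c i • v i ∈ F) : ∀ i, c i • v i ∈ F := by
  induction n with
  | zero => exact fun i => i.elim0
  | succ m ih =>
    rw [Fin.sum_univ_succ] at hx
    have h0 : c 0 • v 0 ∈ C := hC ▸ smul_mem_coneHull (hc 0) (mem_coneHull_of_mem (hv 0))
    have ht : ∑ i : Fin m, c i.succ • v i.succ ∈ C :=
      hC ▸ sum_mem_coneHull _ _ fun i _ =>
        smul_mem_coneHull (hc i.succ) (mem_coneHull_of_mem (hv i.succ))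
    obtain ⟨hF0, hFt⟩ := hF.2 _ h0 _ ht hx
    intro i
    induction i using Fin.cases with
    | zero => exact hF0
    | succ j => exact ih (fun i => hc i.succ) (fun i => hv i.succ) hFt j

end Face
section Duality
variable {ι : Type*} [Fintype ι] [DecidableEq ι]

/-- The standard bilinear pairing on `ι → ℚ`. -/
def stdPair (x y : ι → ℚ) : ℚ := ∑ d, x d * y d

lemma stdPair_comm (x y : ι → ℚ) : stdPair x y = stdPair y x := by
  unfold stdPair; exact Finset.sum_congr rfl fun d _ => mul_comm _ _

lemma stdPair_single_right (x : ι → ℚ) (a : ι) :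
    stdPair x (Pi.single a 1) = x a := by
  unfold stdPair
  rw [Finset.sum_eq_single a]
  · simp
  · intro b _ hb; simp [Pi.single_apply, hb]
  · intro h; exact absurd (Finset.mem_univ a) h

lemma stdPair_self_eq_zero {x : ι → ℚ} (h : stdPair x x = 0) : x = 0 := by
  funext d
  have hsq : ∀ e : ι, 0 ≤ x e * x e := fun e => mul_self_nonneg _
  have := (Finset.sum_eq_zero_iff_of_nonneg (fun e _ => hsq e)).mp h d (Finset.mem_univ d)
  have := mul_self_eq_zero.mp this
  simpa using this

/-- The pairing as a linear map into the dual. -/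
noncomputable def stdPairₗ : (ι → ℚ) →ₗ[ℚ] Module.Dual ℚ (ι → ℚ) where
  toFun x :=
    { toFun := fun y => stdPair x y
      map_add' := fun y z => by unfold stdPair; simp [mul_add, Finset.sum_add_distrib]
      map_smul' := fun c y => by
        unfold stdPair; simp [Finset.mul_sum, mul_left_comm] }
  map_add' x z := by ext y; unfold stdPair; simp [add_mul, Finset.sum_add_distrib]
  map_smul' c x := by ext y; unfold stdPair; simp [Finset.mul_sum, mul_assoc]

@[simp] lemma stdPairₗ_apply (x y : ι → ℚ) : stdPairₗ x y = stdPair x y := rfl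

lemma stdPairₗ_injective : Function.Injective (stdPairₗ (ι := ι)) := by
  rw [injective_iff_map_eq_zero]
  intro x hx
  exact stdPair_self_eq_zero (by rw [← stdPairₗ_apply, hx]; rfl)

lemma stdPairₗ_surjective : Function.Surjective (stdPairₗ (ι := ι)) :=
  (LinearMap.injective_iff_surjective_of_finrank_eq_finrank
    (Subspace.dual_finrank_eq (V := ι → ℚ)).symm).mp stdPairₗ_injective

/-- Orthogonal complement w.r.t. the standard pairing. -/
def orth (U : Submodule ℚ (ι → ℚ)) : Submodule ℚ (ι → ℚ) where
  carrier := {x | ∀ y ∈ U, stdPair x y = 0}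
  add_mem' := by
    intro a b ha hb y hy
    have : stdPair (a + b) y = stdPair a y + stdPair b y := by
      unfold stdPair; simp [add_mul, Finset.sum_add_distrib]
    rw [this, ha y hy, hb y hy, add_zero]
  zero_mem' := by
    intro y hy; unfold stdPair; simp
  smul_mem' := by
    intro c a ha y hy
    have : stdPair (c • a) y = c * stdPair a y := by
      unfold stdPair; simp [Finset.mul_sum, mul_assoc]
    rw [this, ha y hy, mul_zero]

lemma mem_orth {U : Submodule ℚ (ι → ℚ)} {x : ι → ℚ} :
    x ∈ orth U ↔ ∀ y ∈ U, stdPair x y = 0 := Iff.rfl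

lemma orth_ne_bot_of_lt_top {U : Submodule ℚ (ι → ℚ)} (h : U < ⊤) :
    orth U ≠ ⊥ := by
  obtain ⟨f, hf, hfU⟩ := U.exists_dual_map_eq_bot_of_lt_top h inferInstance
  obtain ⟨x, rfl⟩ := stdPairₗ_surjective f
  have hx : x ≠ 0 := fun h => hf (by rw [h, map_zero])
  intro hbot
  apply hx
  rw [← Submodule.mem_bot (R := ℚ), ← hbot, mem_orth]
  intro y hy
  have : stdPairₗ x y ∈ Submodule.map (stdPairₗ x) U := ⟨y, hy, rfl⟩
  rw [hfU] at this
  simpa using this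

lemma orth_eq_bot_iff {U : Submodule ℚ (ι → ℚ)} : orth U = ⊥ ↔ U = ⊤ := by
  constructor
  · intro h
    by_contra hU
    exact orth_ne_bot_of_lt_top (lt_top_iff_ne_top.mpr hU) h
  · rintro rfl
    rw [eq_bot_iff]
    intro x hx
    rw [mem_orth] at hx
    rw [Submodule.mem_bot]
    exact stdPair_self_eq_zero (hx x trivial)

lemma le_orth_orth {U : Submodule ℚ (ι → ℚ)} : U ≤ orth (orth U) := by
  intro x hx y hy
  rw [stdPair_comm]
  exact hy x hx

lemma finrank_orth (U : Submodule ℚ (ι → ℚ)) :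
    Module.finrank ℚ (orth U) = Fintype.card ι - Module.finrank ℚ U := by
  classical
  let res : (ι → ℚ) →ₗ[ℚ] Module.Dual ℚ U := U.subtype.dualMap ∘ₗ stdPairₗ
  have hker : LinearMap.ker res = orth U := by
    ext x
    simp only [LinearMap.mem_ker, res, LinearMap.comp_apply, mem_orth]
    constructor
    · intro h y hy
      have := congrArg (fun g => g ⟨y, hy⟩) h
      simpa using this
    · intro h
      ext y
      simpa using h y y.2
  have hsurj : Function.Surjective res :=
    (LinearMap.dualMap_surjective_of_injective U.injective_subtype).comp stdPairₗ_surjective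
  have := LinearMap.finrank_range_add_finrank_ker res
  rw [hker, LinearMap.range_eq_top.mpr hsurj] at this
  have hdual : Module.finrank ℚ (⊤ : Submodule ℚ (Module.Dual ℚ U)) = Module.finrank ℚ U := by
    rw [finrank_top]
    exact Subspace.dual_finrank_eq
  rw [hdual] at this
  have hE : Module.finrank ℚ (ι → ℚ) = Fintype.card ι := Module.finrank_pi ℚ
  omega

lemma orth_orth (U : Submodule ℚ (ι → ℚ)) : orth (orth U) = U := by
  refine (Submodule.eq_of_le_of_finrank_le le_orth_orth ?_).symm
  rw [finrank_orth, finrank_orth]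
  have h1 : Module.finrank ℚ U ≤ Fintype.card ι := by
    have := Submodule.finrank_le U
    rwa [Module.finrank_pi ℚ] at this
  omega

end Duality
section CoordSpan
variable {ι : Type*} [Fintype ι] [DecidableEq ι]

/-- The coordinate subspace spanned by the standard basis vectors indexed by `A`. -/
def coordSpan (A : Set ι) : Submodule ℚ (ι → ℚ) :=
  Submodule.span ℚ ((fun a => Pi.single a (1 : ℚ)) '' A)

lemma single_eq_smul_single_one (d : ι) (t : ℚ) :
    Pi.single d t = t • (Pi.single d (1 : ℚ) : ι → ℚ) := by
  funext e
  by_cases h : e = d <;> simp [Pi.single_apply, h]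

lemma mem_coordSpan {A : Set ι} {x : ι → ℚ} :
    x ∈ coordSpan A ↔ ∀ d ∉ A, x d = 0 := by
  constructor
  · intro hx d hd
    induction hx using Submodule.span_induction with
    | mem y hy =>
      obtain ⟨a, ha, rfl⟩ := hy
      have : d ≠ a := fun h => hd (h ▸ ha)
      simp [Pi.single_apply, this]
    | zero => simp
    | add y z _ _ hy hz => simp [hy, hz]
    | smul c y _ hy => simp [hy]
  · intro h
    have hx : x = ∑ d, x d • (Pi.single d (1 : ℚ) : ι → ℚ) := by
      conv_lhs => rw [← Finset.univ_sum_single x]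
      exact Finset.sum_congr rfl fun d _ => single_eq_smul_single_one d (x d)
    rw [hx]
    refine Submodule.sum_mem _ fun d _ => ?_
    by_cases hd : d ∈ A
    · exact Submodule.smul_mem _ _ (Submodule.subset_span ⟨d, hd, rfl⟩)
    · rw [h d hd, zero_smul]; exact Submodule.zero_mem _

lemma mem_orth_span {S : Set (ι → ℚ)} {x : ι → ℚ} :
    x ∈ orth (Submodule.span ℚ S) ↔ ∀ y ∈ S, stdPair x y = 0 := by
  constructor
  · exact fun h y hy => h y (Submodule.subset_span hy)
  · intro h y hy
    have : Submodule.span ℚ S ≤ LinearMap.ker (stdPairₗ x) :=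
      Submodule.span_le.mpr fun z hz => by simpa using h z hz
    simpa using this hy

lemma orth_coordSpan (A : Set ι) : orth (coordSpan A) = coordSpan Aᶜ := by
  ext x
  rw [coordSpan, mem_orth_span, mem_coordSpan]
  constructor
  · intro h d hd
    have : d ∈ A := by simpa using hd
    have := h _ ⟨d, this, rfl⟩
    rwa [stdPair_single_right] at this
  · rintro h y ⟨a, ha, rfl⟩
    rw [stdPair_single_right]
    exact h a (by simpa using ha)

lemma stdPair_eq_zero_of_disjoint_support {A : Set ι} {x w : ι → ℚ}
    (hx : x ∈ coordSpan A) (hw : w ∈ coordSpan Aᶜ) : stdPair x w = 0 := by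
  rw [mem_coordSpan] at hx hw
  refine Finset.sum_eq_zero fun d _ => ?_
  by_cases hd : d ∈ A
  · rw [hw d (by simpa using hd), mul_zero]
  · rw [hx d hd, zero_mul]

/-- The key duality equivalence. -/
lemma coordSpan_duality {A : Set ι} {kψ kφ : Submodule ℚ (ι → ℚ)}
    (hφ : kφ = orth kψ) :
    coordSpan A ⊓ kψ = ⊥ ↔ coordSpan Aᶜ ⊔ kφ = ⊤ := by
  constructor
  · intro h
    rw [← orth_eq_bot_iff, eq_bot_iff]
    intro x hx
    have hx1 : x ∈ orth (coordSpan Aᶜ) := fun y hy => hx y (Submodule.mem_sup_left hy)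
    have hx2 : x ∈ orth kφ := fun y hy => hx y (Submodule.mem_sup_right hy)
    rw [orth_coordSpan, compl_compl] at hx1
    rw [hφ, orth_orth] at hx2
    have : x ∈ coordSpan A ⊓ kψ := ⟨hx1, hx2⟩
    rwa [h] at this
  · intro h
    rw [eq_bot_iff]
    rintro x ⟨hxA, hxψ⟩
    have hx : x ∈ orth ⊤ := by
      intro z _
      have hz : z ∈ coordSpan Aᶜ ⊔ kφ := h ▸ Submodule.mem_top
      obtain ⟨w, hw, v, hv, rfl⟩ := Submodule.mem_sup.mp hz
      have h1 : stdPair x w = 0 := stdPair_eq_zero_of_disjoint_support hxA hw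
      have h2 : stdPair x v = 0 := by
        rw [stdPair_comm]
        exact (hφ ▸ hv : v ∈ orth kψ) x hxψ
      have : stdPair x (w + v) = stdPair x w + stdPair x v := map_add (stdPairₗ x) w v
      rw [this, h1, h2, add_zero]
    have : orth (⊤ : Submodule ℚ (ι → ℚ)) = ⊥ := orth_eq_bot_iff.mpr rfl
    rwa [this, Submodule.mem_bot] at hx
end CoordSpan
section MoreHelpers

lemma exists_pos_forall_mul_le {ι : Type*} [Fintype ι] {c d : ι → ℚ}
    (hc : ∀ i, 0 ≤ c i) (hd : ∀ i, 0 ≤ d i) (h0 : ∀ i, c i = 0 → d i = 0) :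
    ∃ ε : ℚ, 0 < ε ∧ ∀ i, ε * d i ≤ c i := by
  classical
  set g : ι → ℚ := fun i => if d i = 0 then 1 else c i / d i with hg
  set F : Finset ℚ := insert 1 (Finset.univ.image g) with hF
  have hFne : F.Nonempty := ⟨1, Finset.mem_insert_self _ _⟩
  refine ⟨F.min' hFne, ?_, ?_⟩
  · have hmem := Finset.mem_insert.mp (F.min'_mem hFne)
    rcases hmem with h | h
    · rw [h]; norm_num
    · obtain ⟨i, _, hi⟩ := Finset.mem_image.mp h
      rw [← hi]
      simp only [hg]
      by_cases hdi : d i = 0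
      · simp [hdi]
      · have hci : 0 < c i := by
          rcases lt_or_eq_of_le (hc i) with h' | h'
          · exact h'
          · exact absurd (h0 i h'.symm) hdi
        have hdi' : 0 < d i := lt_of_le_of_ne (hd i) (Ne.symm hdi)
        simp only [hdi, if_false]
        positivity
  · intro i
    by_cases hdi : d i = 0
    · rw [hdi, mul_zero]; exact hc i
    · have hdi' : 0 < d i := lt_of_le_of_ne (hd i) (Ne.symm hdi)
      have hle0 : F.min' hFne ≤ g i :=
        Finset.min'_le _ _ (Finset.mem_insert_of_mem (Finset.mem_image_of_mem g (Finset.mem_univ i)))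
      have hle : F.min' hFne ≤ c i / d i := by
        have : g i = c i / d i := by simp only [hg]; simp [hdi]
        rwa [this] at hle0
      calc F.min' hFne * d i ≤ (c i / d i) * d i := by
            apply mul_le_mul_of_nonneg_right hle (hd i)
        _ = c i := div_mul_cancel₀ _ hdi

lemma coneHull_singleton_smul {W : Type*} [AddCommGroup W] [Module ℚ W]
    {c : ℚ} (hc : 0 < c) (s : W) : coneHull ℚ {c • s} = coneHull ℚ {s} := by
  ext x
  rw [mem_coneHull_singleton, mem_coneHull_singleton]
  constructor
  · rintro ⟨t, ht, rfl⟩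
    exact ⟨t * c, mul_nonneg ht hc.le, by rw [mul_smul]⟩
  · rintro ⟨t, ht, rfl⟩
    refine ⟨t / c, div_nonneg ht hc.le, ?_⟩
    rw [smul_smul, div_mul_cancel₀ _ hc.ne']

end MoreHelpers
/-- The set `{e_D : D ∈ I ∪ J}` of standard basis vectors of `E = ℚ^(𝔇 ⊔ ℜ)`. -/
def genSet {𝔇 ℜ : Type*} [DecidableEq 𝔇] [DecidableEq ℜ] (I : Set 𝔇) (J : Set ℜ) :
    Set ((𝔇 ⊕ ℜ) → ℚ) :=
  (fun D : 𝔇 => Pi.single (Sum.inl D) (1 : ℚ)) '' I ∪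
    (fun Y : ℜ => Pi.single (Sum.inr Y) (1 : ℚ)) '' J

/-- The Gale duality setup: `ψ : ℚ^(𝔇⊔ℜ) → N` and `φ : ℚ^(𝔇⊔ℜ) → K` are surjective linear
maps whose kernels are orthogonal complements of each other w.r.t. the standard inner
product, `V ⊆ N` is a cosimplicial cone, each `u_Y = ψ(e_Y)` is a nonzero element of `V`,
the rays `ℚ≥0·u_Y` are pairwise distinct, and the `ψ(e_D)`, `D ∈ 𝔇 ⊔ ℜ`, generate `N`
as a convex cone. -/
structure GaleSetup (𝔇 ℜ N K : Type*) [Fintype 𝔇] [Fintype ℜ]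
    [DecidableEq 𝔇] [DecidableEq ℜ]
    [AddCommGroup N] [Module ℚ N] [FiniteDimensional ℚ N]
    [AddCommGroup K] [Module ℚ K] [FiniteDimensional ℚ K] where
  ψ : ((𝔇 ⊕ ℜ) → ℚ) →ₗ[ℚ] N
  φ : ((𝔇 ⊕ ℜ) → ℚ) →ₗ[ℚ] K
  ψ_surj : Function.Surjective ψ
  φ_surj : Function.Surjective φ
  ker_dual : ∀ x : (𝔇 ⊕ ℜ) → ℚ,
    x ∈ LinearMap.ker φ ↔ ∀ y ∈ LinearMap.ker ψ, ∑ d : 𝔇 ⊕ ℜ, x d * y d = 0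
  V : Set N
  cosimplicial : ∃ (s : ℕ) (χ : Fin s → (N →ₗ[ℚ] ℚ)),
    LinearIndependent ℚ χ ∧ V = {v : N | ∀ i, χ i v ≤ 0}
  u_mem_V : ∀ Y : ℜ, ψ (Pi.single (Sum.inr Y) 1) ∈ V
  u_ne_zero : ∀ Y : ℜ, ψ (Pi.single (Sum.inr Y) 1) ≠ 0
  rays_distinct : ∀ Y Y' : ℜ, Y ≠ Y' →
    coneHull ℚ {ψ (Pi.single (Sum.inr Y) 1)} ≠ coneHull ℚ {ψ (Pi.single (Sum.inr Y') 1)}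
  gen_cone_top : coneHull ℚ (Set.range fun d : 𝔇 ⊕ ℜ => ψ (Pi.single d 1)) = Set.univ

namespace GaleSetup

variable {𝔇 ℜ N K : Type*} [Fintype 𝔇] [Fintype ℜ] [DecidableEq 𝔇] [DecidableEq ℜ]
    [AddCommGroup N] [Module ℚ N] [FiniteDimensional ℚ N]
    [AddCommGroup K] [Module ℚ K] [FiniteDimensional ℚ K]
    (G : GaleSetup 𝔇 ℜ N K)

/-- `ρ(D) = ψ(e_D)` for a color `D ∈ 𝔇`. -/
def ρ (D : 𝔇) : N := G.ψ (Pi.single (Sum.inl D) 1)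

/-- The ψ-cone `(cone(ψ({e_D : D ∈ I ∪ J})), I)`. -/
def psiCone (I : Set 𝔇) (J : Set ℜ) : Set N × Set 𝔇 :=
  (coneHull ℚ (G.ψ '' genSet I J), I)

/-- `σ` is a ψ-cone. -/
def IsPsiCone (σ : Set N × Set 𝔇) : Prop := ∃ I J, σ = G.psiCone I J

/-- A ψ-cone is supported if the relative interior of its cone meets `V`. -/
def PsiSupported (σ : Set N × Set 𝔇) : Prop :=
  (coneRelint ℚ σ.1 ∩ G.V).Nonempty

/-- The φ-cone `cone(φ({e_D : D ∈ I ∪ J}))`. -/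
def phiCone (I : Set 𝔇) (J : Set ℜ) : Set K := coneHull ℚ (G.φ '' genSet I J)

/-- `τ` is a φ-cone. -/
def IsPhiCone (τ : Set K) : Prop := ∃ I J, τ = G.phiCone I J

/-- `Σ^♯` for a collection `Σ` of ψ-cones. -/
def psiSharp (𝒮 : Set (Set N × Set 𝔇)) : Set (Set K) :=
  {τ | ∃ I J, G.psiCone I J ∈ 𝒮 ∧ τ = G.phiCone Iᶜ Jᶜ}

/-- `Θ^♯` for a collection `Θ` of φ-cones. -/
def phiSharp (Θ : Set (Set K)) : Set (Set N × Set 𝔇) :=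
  {σ | ∃ I J, G.phiCone I J ∈ Θ ∧ σ = G.psiCone Iᶜ Jᶜ}

/-- A φ-cone is supported if `{τ}^♯` contains a supported ψ-cone. -/
def PhiSupported (τ : Set K) : Prop :=
  ∃ σ ∈ G.phiSharp {τ}, G.PsiSupported σ

/-- The overline operation: remove all non-supported ψ-cones from a collection. -/
def overline (𝒮 : Set (Set N × Set 𝔇)) : Set (Set N × Set 𝔇) :=
  {σ ∈ 𝒮 | G.PsiSupported σ}

/-- `σ'` is a (colored) face of the ψ-cone `σ`. -/
def IsPsiFace (σ' σ : Set N × Set 𝔇) : Prop :=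
  G.IsPsiCone σ' ∧ IsConeFace σ'.1 σ.1 ∧ σ'.2 = σ.2 ∩ {D : 𝔇 | G.ρ D ∈ σ'.1}

/-- A ψ-cone is pointed if its cone is pointed and `0 ∉ ψ({e_D : D ∈ F(σ)})`. -/
def PsiPointed (σ : Set N × Set 𝔇) : Prop :=
  (∀ x ∈ σ.1, -x ∈ σ.1 → x = 0) ∧ ∀ D ∈ σ.2, G.ρ D ≠ (0 : N)

/-- A ψ-cone is simplicial if its cone is spanned by part of a `ℚ`-basis of `N` containing
`ψ({e_D : D ∈ F(σ)})` and `D ↦ ψ(e_D)` is injective on `F(σ)`. -/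
def PsiSimplicial (σ : Set N × Set 𝔇) : Prop :=
  (∃ S : Set N, LinearIndependent ℚ (fun x : S => (x : N)) ∧ (∀ D ∈ σ.2, G.ρ D ∈ S) ∧
    σ.1 = coneHull ℚ S) ∧ Set.InjOn G.ρ σ.2

/-- A ψ-fan: a nonempty collection of supported pointed ψ-cones, closed under supported
faces, whose members' relative interiors are pairwise disjoint. -/
def IsPsiFan (𝒮 : Set (Set N × Set 𝔇)) : Prop :=
  𝒮.Nonempty ∧
  (∀ σ ∈ 𝒮, G.IsPsiCone σ ∧ G.PsiSupported σ ∧ G.PsiPointed σ) ∧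
  (∀ σ ∈ 𝒮, ∀ σ', G.IsPsiFace σ' σ → G.PsiSupported σ' → σ' ∈ 𝒮) ∧
  (∀ v : N, ∀ σ ∈ 𝒮, ∀ σ' ∈ 𝒮,
    v ∈ coneRelint ℚ σ.1 → v ∈ coneRelint ℚ σ'.1 → σ = σ')

/-- A ψ-fan is true if it contains `(cone(u_Y), ∅)` for every `Y ∈ ℜ` and, in case
`𝔇 ≠ ∅`, also `(0, ∅)`. -/
def IsTruePsiFan (𝒮 : Set (Set N × Set 𝔇)) : Prop :=
  G.IsPsiFan 𝒮 ∧
  (∀ Y : ℜ, (coneHull ℚ {G.ψ (Pi.single (Sum.inr Y) 1)}, (∅ : Set 𝔇)) ∈ 𝒮) ∧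
  (Nonempty 𝔇 → (({0} : Set N), (∅ : Set 𝔇)) ∈ 𝒮)

/-- A true maximal ψ-fan: a true ψ-fan that cannot be enlarged while remaining a ψ-fan. -/
def IsTrueMaxPsiFan (𝒮 : Set (Set N × Set 𝔇)) : Prop :=
  G.IsTruePsiFan 𝒮 ∧ ∀ 𝒮', G.IsPsiFan 𝒮' → 𝒮 ⊆ 𝒮' → 𝒮' = 𝒮

/-- A φ-bunch: a nonempty collection of supported φ-cones, the relative interiors of any
two members intersect, and every supported φ-cone whose relative interior contains the
relative interior of some member belongs to the collection. -/
def IsPhiBunch (Θ : Set (Set K)) : Prop :=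
  Θ.Nonempty ∧
  (∀ τ ∈ Θ, G.IsPhiCone τ ∧ G.PhiSupported τ) ∧
  (∀ τ₁ ∈ Θ, ∀ τ₂ ∈ Θ, (coneRelint ℚ τ₁ ∩ coneRelint ℚ τ₂).Nonempty) ∧
  (∀ τ₁ ∈ Θ, ∀ τ : Set K, G.IsPhiCone τ → G.PhiSupported τ →
    coneRelint ℚ τ₁ ⊆ coneRelint ℚ τ → τ ∈ Θ)

/-- A φ-bunch is true if it contains `cone(φ({e_D : D ∈ 𝔇 ∪ (ℜ∖{Y})}))` for every
`Y ∈ ℜ` and, in case `𝔇 ≠ ∅`, also `cone(φ({e_D : D ∈ 𝔇 ⊔ ℜ}))`. -/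
def IsTruePhiBunch (Θ : Set (Set K)) : Prop :=
  G.IsPhiBunch Θ ∧
  (∀ Y : ℜ, G.phiCone Set.univ ({Y}ᶜ) ∈ Θ) ∧
  (Nonempty 𝔇 → G.phiCone Set.univ Set.univ ∈ Θ)

/-- A true maximal φ-bunch: a true φ-bunch that cannot be enlarged while remaining a
φ-bunch. -/
def IsTrueMaxPhiBunch (Θ : Set (Set K)) : Prop :=
  G.IsTruePhiBunch Θ ∧ ∀ Θ', G.IsPhiBunch Θ' → Θ ⊆ Θ' → Θ' = Θ

/-- A φ-cone has full dimension in `K`. -/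
def PhiFullDim (_G : GaleSetup 𝔇 ℜ N K) (τ : Set K) : Prop :=
  Module.finrank ℚ (Submodule.span ℚ τ) = Module.finrank ℚ K

end GaleSetup

namespace GaleSetup

variable {𝔇 ℜ N K : Type*} [Fintype 𝔇] [Fintype ℜ] [DecidableEq 𝔇] [DecidableEq ℜ]
    [AddCommGroup N] [Module ℚ N] [FiniteDimensional ℚ N]
    [AddCommGroup K] [Module ℚ K] [FiniteDimensional ℚ K]
    (G : GaleSetup 𝔇 ℜ N K)

/-- The index set in `𝔇 ⊕ ℜ` corresponding to `I` and `J`. -/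
def idxSet (I : Set 𝔇) (J : Set ℜ) : Set (𝔇 ⊕ ℜ) := Sum.inl '' I ∪ Sum.inr '' J

lemma genSet_eq (I : Set 𝔇) (J : Set ℜ) :
    genSet I J = (fun a => Pi.single a (1 : ℚ)) '' idxSet I J := by
  unfold genSet idxSet
  rw [Set.image_union, Set.image_image, Set.image_image]

lemma idxSet_compl (I : Set 𝔇) (J : Set ℜ) : idxSet Iᶜ Jᶜ = (idxSet I J)ᶜ := by
  ext a
  cases a <;> simp [idxSet]

lemma span_phiCone (I : Set 𝔇) (J : Set ℜ) :
    Submodule.span ℚ (G.phiCone I J) = (coordSpan (idxSet I J)).map G.φ := by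
  unfold phiCone
  rw [span_coneHull, genSet_eq, coordSpan, Submodule.span_image]

lemma map_eq_top_iff {U : Submodule ℚ ((𝔇 ⊕ ℜ) → ℚ)} :
    U.map G.φ = ⊤ ↔ U ⊔ LinearMap.ker G.φ = ⊤ := by
  constructor
  · intro h
    rw [← Submodule.comap_map_eq G.φ U, h, Submodule.comap_top]
  · intro h
    have : (U ⊔ LinearMap.ker G.φ).map G.φ = ⊤ := by
      rw [h, Submodule.map_top, LinearMap.range_eq_top]
      exact G.φ_surj
    rw [Submodule.map_sup] at this
    have hker : (LinearMap.ker G.φ).map G.φ = ⊥ := by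
      rw [eq_bot_iff]
      rintro x ⟨y, hy, rfl⟩
      simpa using hy
    rwa [hker, sup_bot_eq] at this

lemma ker_phi_eq_orth : LinearMap.ker G.φ = orth (LinearMap.ker G.ψ) := by
  ext x
  rw [mem_orth]
  exact G.ker_dual x

lemma fullDim_iff (I : Set 𝔇) (J : Set ℜ) :
    G.PhiFullDim (G.phiCone Iᶜ Jᶜ) ↔
      coordSpan (idxSet I J) ⊓ LinearMap.ker G.ψ = ⊥ := by
  unfold PhiFullDim
  rw [coordSpan_duality (G.ker_phi_eq_orth)]
  rw [← G.map_eq_top_iff, ← idxSet_compl, ← span_phiCone]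
  constructor
  · intro h
    exact Submodule.eq_top_of_finrank_eq h
  · intro h
    rw [h]
    exact finrank_top ℚ K

lemma indep_iff (I : Set 𝔇) (J : Set ℜ) :
    LinearIndependent ℚ (fun a : idxSet I J => G.ψ (Pi.single (a : 𝔇 ⊕ ℜ) 1)) ↔
      coordSpan (idxSet I J) ⊓ LinearMap.ker G.ψ = ⊥ := by
  classical
  set A := idxSet I J with hA
  have hspan : Submodule.span ℚ (Set.range fun a : A => (Pi.single (a : 𝔇 ⊕ ℜ) (1:ℚ) : (𝔇 ⊕ ℜ) → ℚ))
      = coordSpan A := by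
    have him : (Set.range fun a : A => (Pi.single (a : 𝔇 ⊕ ℜ) (1:ℚ) : (𝔇 ⊕ ℜ) → ℚ))
        = (fun a : 𝔇 ⊕ ℜ => Pi.single a (1:ℚ)) '' A :=
      (Set.image_eq_range (fun a : 𝔇 ⊕ ℜ => Pi.single a (1:ℚ)) A).symm
    rw [him]
    rfl
  constructor
  · intro hli
    rw [eq_bot_iff]
    rintro x ⟨hxA, hxψ⟩
    rw [SetLike.mem_coe, mem_coordSpan] at hxA
    have hx : x = ∑ d, x d • (Pi.single d (1 : ℚ) : (𝔇 ⊕ ℜ) → ℚ) := by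
      conv_lhs => rw [← Finset.univ_sum_single x]
      exact Finset.sum_congr rfl fun d _ => single_eq_smul_single_one d (x d)
    have hψx : ∑ a : A, x (a : 𝔇 ⊕ ℜ) • G.ψ (Pi.single (a : 𝔇 ⊕ ℜ) 1) = 0 := by
      have h1 : G.ψ x = 0 := hxψ
      rw [hx, map_sum] at h1
      rw [← h1]
      rw [← Finset.sum_subtype (Finset.univ.filter (fun d => d ∈ A))
        (fun d => by simp) (fun d => x d • G.ψ (Pi.single d 1))]
      rw [Finset.sum_filter_of_ne]
      · exact Finset.sum_congr rfl fun d _ => by rw [map_smul]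
      · intro d _ hne
        by_contra hd
        exact hne (by rw [hxA d hd, zero_smul])
    have := Fintype.linearIndependent_iff.mp hli (fun a => x (a : 𝔇 ⊕ ℜ)) hψx
    rw [Submodule.mem_bot]
    funext d
    by_cases hd : d ∈ A
    · exact this ⟨d, hd⟩
    · exact hxA d hd
  · intro hbot
    have hbase : LinearIndependent ℚ (fun a : A => (Pi.single (a : 𝔇 ⊕ ℜ) (1:ℚ) : (𝔇 ⊕ ℜ) → ℚ)) := by
      have h1 := (Pi.basisFun ℚ (𝔇 ⊕ ℜ)).linearIndependent.comp
        (Subtype.val : A → 𝔇 ⊕ ℜ) Subtype.val_injective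
      have h2 : (fun a : A => (Pi.single (a : 𝔇 ⊕ ℜ) (1:ℚ) : (𝔇 ⊕ ℜ) → ℚ))
          = (⇑(Pi.basisFun ℚ (𝔇 ⊕ ℜ)) ∘ (Subtype.val : A → 𝔇 ⊕ ℜ)) := by
        funext a
        simp [Pi.basisFun_apply]
      rw [h2]
      exact h1
    have hdisj : Disjoint (Submodule.span ℚ
        (Set.range fun a : A => (Pi.single (a : 𝔇 ⊕ ℜ) (1:ℚ) : (𝔇 ⊕ ℜ) → ℚ))) (LinearMap.ker G.ψ) := by
      rw [hspan, disjoint_iff, hbot]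
    have := hbase.map hdisj
    exact this

end GaleSetup

namespace GaleSetup

variable {𝔇 ℜ N K : Type*} [Fintype 𝔇] [Fintype ℜ] [DecidableEq 𝔇] [DecidableEq ℜ]
    [AddCommGroup N] [Module ℚ N] [FiniteDimensional ℚ N]
    [AddCommGroup K] [Module ℚ K] [FiniteDimensional ℚ K]
    (G : GaleSetup 𝔇 ℜ N K)

lemma image_genSet (I₀ : Set 𝔇) (J₀ : Set ℜ) :
    G.ψ '' genSet I₀ J₀ =
      G.ρ '' I₀ ∪ (fun Y0 => G.ψ (Pi.single (Sum.inr Y0) 1)) '' J₀ := by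
  unfold genSet
  rw [Set.image_union, Set.image_image, Set.image_image]
  rfl

lemma ray_data {𝒮 : Set (Set N × Set 𝔇)} (h : G.IsTruePsiFan 𝒮) {I : Set 𝔇} {J : Set ℜ}
    (hmem : G.psiCone I J ∈ 𝒮)
    {S : Set N} (hSli : LinearIndependent ℚ (fun x : S => (x : N)))
    (hC : coneHull ℚ (G.ψ '' genSet I J) = coneHull ℚ S)
    {Y : ℜ} (hY : Y ∈ J) :
    ∃ s ∈ S, s ∉ G.ρ '' I ∧ (∃ c : ℚ, 0 < c ∧ G.ψ (Pi.single (Sum.inr Y) 1) = c • s) ∧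
      coneHull ℚ {G.ψ (Pi.single (Sum.inr Y) 1)} = coneHull ℚ {s} := by
  classical
  have hfin : S.Finite := hSli.setFinite
  haveI : Fintype S := hfin.fintype
  obtain ⟨f, hf1, hf0⟩ := exists_coord hSli
  set u : N := G.ψ (Pi.single (Sum.inr Y) 1) with hu
  have huG0 : u ∈ G.ψ '' genSet I J := ⟨Pi.single (Sum.inr Y) 1, Or.inr ⟨Y, hY, rfl⟩, rfl⟩
  have huC : u ∈ coneHull ℚ S := hC ▸ mem_coneHull_of_mem huG0
  set S' : Set N := Subtype.val '' {s : S | f s u ≠ 0} with hS'def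
  have hS'sub : S' ⊆ S := by rintro x ⟨s, _, rfl⟩; exact s.2
  have hmemS' : ∀ s : S, ((s : N) ∈ S' ↔ f s u ≠ 0) := by
    intro s
    constructor
    · rintro ⟨t, ht, hts⟩
      rwa [show t = s from Subtype.ext hts] at ht
    · intro hne
      exact ⟨s, hne, rfl⟩
  set C' : Set N := coneHull ℚ S' with hC'def
  have hrestrict : ∀ x ∈ coneHull ℚ S, (∀ s : S, (s : N) ∉ S' → f s x = 0) → x ∈ C' := by
    intro x hx hvan
    have hr := coord_repr hf1 hf0 hx
    have hfil : x = ∑ s ∈ Finset.univ.filter (fun s : S => (s : N) ∈ S'),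
        f s x • (s : N) := by
      conv_lhs => rw [hr]
      refine (Finset.sum_filter_of_ne ?_).symm
      intro s _ hne
      by_contra hs
      exact hne (by rw [hvan s hs, zero_smul])
    rw [hfil]
    exact sum_mem_coneHull _ _ fun s hs =>
      smul_mem_coneHull (coord_nonneg hf1 hf0 hx s)
        (mem_coneHull_of_mem (Finset.mem_filter.mp hs).2)
  have huC' : u ∈ C' :=
    hrestrict u huC fun s hs => not_not.mp fun hne => hs ((hmemS' s).mpr hne)
  have hurel : u ∈ coneRelint ℚ C' := by
    refine ⟨huC', fun y hy => ?_⟩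
    have hyS : y ∈ coneHull ℚ S := coneHull_mono hS'sub hy
    obtain ⟨ε, hεpos, hεle⟩ := exists_pos_forall_mul_le
      (c := fun s : S => f s u) (d := fun s : S => f s y)
      (coord_nonneg hf1 hf0 huC) (coord_nonneg hf1 hf0 hyS)
      (fun s hs0 => coord_zero_of_subset hf0 hS'sub hy s
        (fun hmem' => ((hmemS' s).mp hmem') hs0))
    refine ⟨ε, hεpos, ?_⟩
    have hdiff : u - ε • y = ∑ s : S, (f s u - ε * f s y) • (s : N) := by
      calc u - ε • y
          = (∑ s : S, f s u • (s : N)) - ε • (∑ s : S, f s y • (s : N)) := by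
            rw [← coord_repr hf1 hf0 huC, ← coord_repr hf1 hf0 hyS]
        _ = ∑ s : S, (f s u - ε * f s y) • (s : N) := by
            rw [Finset.smul_sum, ← Finset.sum_sub_distrib]
            exact Finset.sum_congr rfl fun s _ => by rw [smul_smul, ← sub_smul]
    have hmemS : u - ε • y ∈ coneHull ℚ S := by
      rw [hdiff]
      exact sum_mem_coneHull _ _ fun s _ =>
        smul_mem_coneHull (by have := hεle s; linarith) (mem_coneHull_of_mem s.2)
    refine hrestrict _ hmemS ?_
    intro s hs
    have h1 : f s u = 0 := not_not.mp fun hne => hs ((hmemS' s).mpr hne)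
    have h2 : f s y = 0 := coord_zero_of_subset hf0 hS'sub hy s hs
    rw [map_sub, map_smul, h1, h2, smul_eq_mul, mul_zero, sub_zero]
  have hface : IsConeFace C' (coneHull ℚ S) := isConeFace_coneHull hSli hS'sub
  set I' : Set 𝔇 := I ∩ {D | G.ρ D ∈ C'} with hI'def
  set J' : Set ℜ := J ∩ {Y' | G.ψ (Pi.single (Sum.inr Y') 1) ∈ C'} with hJ'def
  have himg : G.ψ '' genSet I' J' = (G.ψ '' genSet I J) ∩ C' := by
    rw [G.image_genSet, G.image_genSet, Set.union_inter_distrib_right]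
    congr 1
    · ext x
      constructor
      · rintro ⟨D, hD, rfl⟩
        exact ⟨⟨D, hD.1, rfl⟩, hD.2⟩
      · rintro ⟨⟨D, hD, rfl⟩, hx⟩
        exact ⟨D, ⟨hD, hx⟩, rfl⟩
    · ext x
      constructor
      · rintro ⟨Y0, hY0, rfl⟩
        exact ⟨⟨Y0, hY0.1, rfl⟩, hY0.2⟩
      · rintro ⟨⟨Y0, hY0, rfl⟩, hx⟩
        exact ⟨Y0, ⟨hY0, hx⟩, rfl⟩
  have hC'eq : coneHull ℚ ((G.ψ '' genSet I J) ∩ C') = C' := by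
    apply subset_antisymm
    · exact coneHull_subset fun x hx => hx.2
    · apply coneHull_subset
      intro s hsS'
      have hsC' : s ∈ C' := mem_coneHull_of_mem hsS'
      have hsC : s ∈ coneHull ℚ (G.ψ '' genSet I J) := by
        rw [hC]
        exact mem_coneHull_of_mem (hS'sub hsS')
      obtain ⟨n, cc, v, hcc, hv, hsum⟩ := hsC
      have hterm : ∀ i, cc i • v i ∈ C' :=
        term_mem_of_isConeFace hface hC.symm hcc hv (hsum ▸ hsC')
      rw [hsum]
      refine sum_mem_coneHull _ _ fun i _ => ?_
      by_cases hci : cc i = 0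
      · rw [hci, zero_smul]
        exact zero_mem_coneHull
      · have hvi : v i ∈ (G.ψ '' genSet I J) ∩ C' := by
          refine ⟨hv i, ?_⟩
          have := smul_mem_coneHull (inv_nonneg.mpr (hcc i)) (hterm i)
          rwa [smul_smul, inv_mul_cancel₀ hci, one_smul] at this
        exact smul_mem_coneHull (hcc i) (mem_coneHull_of_mem hvi)
  have hψcone : G.psiCone I' J' = (C', I') := by
    show (coneHull ℚ (G.ψ '' genSet I' J'), I') = (C', I')
    rw [himg, hC'eq]
  have hfaceσ : G.IsPsiFace (C', I') (G.psiCone I J) := by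
    refine ⟨⟨I', J', hψcone.symm⟩, ?_, ?_⟩
    · show IsConeFace C' (coneHull ℚ (G.ψ '' genSet I J))
      rw [hC]
      exact hface
    · rfl
  have hsupp : G.PsiSupported (C', I') := ⟨u, hurel, G.u_mem_V Y⟩
  have hσ'mem : ((C', I') : Set N × Set 𝔇) ∈ 𝒮 := h.1.2.2.1 _ hmem _ hfaceσ hsupp
  have hraymem : ((coneHull ℚ {u}, (∅ : Set 𝔇)) : Set N × Set 𝔇) ∈ 𝒮 := h.2.1 Y
  have heq : ((C', I') : Set N × Set 𝔇) = (coneHull ℚ {u}, ∅) :=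
    h.1.2.2.2 u _ hσ'mem _ hraymem hurel relint_ray
  have hC'ray : C' = coneHull ℚ {u} := congrArg Prod.fst heq
  have hI'empty : I' = ∅ := congrArg Prod.snd heq
  have hS'ne : S'.Nonempty := by
    by_contra hne
    rw [Set.not_nonempty_iff_eq_empty] at hne
    have hz : C' = {0} := by rw [hC'def, hne, coneHull_empty]
    rw [hz] at huC'
    exact G.u_ne_zero Y (by simpa using huC')
  obtain ⟨s, hsS'⟩ := hS'ne
  have hsS : s ∈ S := hS'sub hsS'
  have hsC' : s ∈ C' := mem_coneHull_of_mem hsS'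
  have hsne : s ≠ 0 := hSli.ne_zero ⟨s, hsS⟩
  obtain ⟨t, ht0, hts⟩ := mem_coneHull_singleton.mp (hC'ray ▸ hsC')
  have htpos : 0 < t := lt_of_le_of_ne ht0 fun hteq =>
    hsne (by rw [hts, ← hteq, zero_smul])
  refine ⟨s, hsS, ?_, ⟨t⁻¹, inv_pos.mpr htpos, ?_⟩, ?_⟩
  · rintro ⟨D, hD, hDs⟩
    have hmemI' : D ∈ I' := ⟨hD, show G.ρ D ∈ C' by rw [hDs]; exact hsC'⟩
    rw [hI'empty] at hmemI'
    exact hmemI'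
  · rw [hts, smul_smul, inv_mul_cancel₀ htpos.ne', one_smul]
  · rw [hts]
    exact (coneHull_singleton_smul htpos u).symm

end GaleSetup

namespace GaleSetup

variable {𝔇 ℜ N K : Type*} [Fintype 𝔇] [Fintype ℜ] [DecidableEq 𝔇] [DecidableEq ℜ]
    [AddCommGroup N] [Module ℚ N] [FiniteDimensional ℚ N]
    [AddCommGroup K] [Module ℚ K] [FiniteDimensional ℚ K]
    (G : GaleSetup 𝔇 ℜ N K)

lemma psiSimplicial_of_indep {I : Set 𝔇} {J : Set ℜ}
    (hli : LinearIndependent ℚ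
      (fun a : idxSet I J => G.ψ (Pi.single (a : 𝔇 ⊕ ℜ) 1))) :
    G.PsiSimplicial (G.psiCone I J) := by
  have himg : G.ψ '' genSet I J
      = Set.range (fun a : idxSet I J => G.ψ (Pi.single (a : 𝔇 ⊕ ℜ) 1)) := by
    rw [genSet_eq, Set.image_image]
    exact Set.image_eq_range _ _
  constructor
  · refine ⟨G.ψ '' genSet I J, ?_, ?_, rfl⟩
    · rw [himg]
      exact (linearIndepOn_id_range_iff hli.injective).mpr hli
    · intro D hD
      exact ⟨Pi.single (Sum.inl D) 1, Set.mem_union_left _ ⟨D, hD, rfl⟩, rfl⟩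
  · intro D hD D' hD' hEq
    have hmema : Sum.inl D ∈ idxSet I J := Set.mem_union_left _ ⟨D, hD, rfl⟩
    have hmemb : Sum.inl D' ∈ idxSet I J := Set.mem_union_left _ ⟨D', hD', rfl⟩
    have := hli.injective (a₁ := ⟨Sum.inl D, hmema⟩) (a₂ := ⟨Sum.inl D', hmemb⟩) hEq
    have := congrArg Subtype.val this
    exact Sum.inl.inj this

lemma indep_of_fan {𝒮 : Set (Set N × Set 𝔇)} (h : G.IsTruePsiFan 𝒮)
    {I : Set 𝔇} {J : Set ℜ} (hmem : G.psiCone I J ∈ 𝒮)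
    (hs : G.PsiSimplicial (G.psiCone I J)) :
    LinearIndependent ℚ (fun a : idxSet I J => G.ψ (Pi.single (a : 𝔇 ⊕ ℜ) 1)) := by
  classical
  obtain ⟨⟨S, hSli, hρS, hC⟩, hinj⟩ := hs
  have hval : ∀ a : idxSet I J, ∃ (s : N) (t : ℚ), s ∈ S ∧ 0 < t ∧
      G.ψ (Pi.single (a : 𝔇 ⊕ ℜ) 1) = t • s ∧
      ((∃ D ∈ I, (a : 𝔇 ⊕ ℜ) = Sum.inl D ∧ s = G.ρ D) ∨
       (s ∉ G.ρ '' I ∧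
         coneHull ℚ {G.ψ (Pi.single (a : 𝔇 ⊕ ℜ) 1)} = coneHull ℚ {s} ∧
         ∃ Y ∈ J, (a : 𝔇 ⊕ ℜ) = Sum.inr Y)) := by
    intro a
    rcases (Set.mem_union _ _ _).mp a.2 with ⟨D, hD, hDa⟩ | ⟨Y, hY, hYa⟩
    · refine ⟨G.ρ D, 1, hρS D hD, one_pos, ?_, Or.inl ⟨D, hD, hDa.symm, rfl⟩⟩
      rw [← hDa, one_smul]
      rfl
    · obtain ⟨s, hsS, hnotI, ⟨c, hcpos, hceq⟩, hray⟩ := G.ray_data h hmem hSli hC hY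
      refine ⟨s, c, hsS, hcpos, ?_, Or.inr ⟨hnotI, ?_, Y, hY, hYa.symm⟩⟩
      · rw [← hYa]
        exact hceq
      · rw [← hYa]
        exact hray
  choose sfun tfun hsfunS htfunpos hfun hcasefun using hval
  have ginj : Function.Injective
      (fun a : idxSet I J => (⟨sfun a, hsfunS a⟩ : S)) := by
    intro a b hab
    have hsab : sfun a = sfun b := congrArg Subtype.val hab
    rcases hcasefun a with ⟨D, hD, haD, hsaD⟩ | ⟨hnotIa, hraya, Y, hY, haY⟩ <;>
      rcases hcasefun b with ⟨D', hD', hbD, hsbD⟩ | ⟨hnotIb, hrayb, Y', hY', hbY⟩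
    · have hρeq : G.ρ D = G.ρ D' := by rw [← hsaD, ← hsbD, hsab]
      have hDD : D = D' := hinj hD hD' hρeq
      apply Subtype.ext
      rw [haD, hbD, hDD]
    · exact absurd ⟨D, hD, by rw [← hsaD, hsab]⟩ hnotIb
    · exact absurd ⟨D', hD', by rw [← hsbD, ← hsab]⟩ hnotIa
    · by_cases hYY : Y = Y'
      · apply Subtype.ext
        rw [haY, hbY, hYY]
      · exfalso
        apply G.rays_distinct Y Y' hYY
        have h1 : coneHull ℚ {G.ψ (Pi.single (Sum.inr Y) 1)} = coneHull ℚ {sfun a} := by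
          rw [← haY]
          exact hraya
        have h2 : coneHull ℚ {G.ψ (Pi.single (Sum.inr Y') 1)} = coneHull ℚ {sfun b} := by
          rw [← hbY]
          exact hrayb
        rw [h1, h2, hsab]
  have hbase := hSli.comp _ ginj
  set w : idxSet I J → ℚˣ := fun a => Units.mk0 (tfun a) (htfunpos a).ne' with hw
  have hfam : (fun a : idxSet I J => G.ψ (Pi.single (a : 𝔇 ⊕ ℜ) 1))
      = (w • fun a : idxSet I J => sfun a) := by
    funext a
    rw [Pi.smul_apply', Units.smul_def, hw, Units.val_mk0]
    exact hfun a
  rw [hfam]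
  exact hbase.units_smul w

end GaleSetup

/-- A true maximal ψ-fan `𝒮` consists of simplicial ψ-cones iff the corresponding true
maximal φ-bunch `𝒮^♯` consists of φ-cones of dimension `dim K`. -/
theorem simplicial_iff_fullDim {𝔇 ℜ N K : Type*} [Fintype 𝔇] [Fintype ℜ] [DecidableEq 𝔇] [DecidableEq ℜ]
    [AddCommGroup N] [Module ℚ N] [FiniteDimensional ℚ N]
    [AddCommGroup K] [Module ℚ K] [FiniteDimensional ℚ K]
    (G : GaleSetup 𝔇 ℜ N K)
    (𝒮 : Set (Set N × Set 𝔇)) (h𝒮 : G.IsTrueMaxPsiFan 𝒮) :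
    (∀ σ ∈ 𝒮, G.PsiSimplicial σ) ↔ ∀ τ ∈ G.psiSharp 𝒮, G.PhiFullDim τ := by
  obtain ⟨htrue, _hmax⟩ := h𝒮
  constructor
  · intro hall τ hτ
    obtain ⟨I, J, hmem, rfl⟩ := hτ
    rw [G.fullDim_iff, ← G.indep_iff]
    exact G.indep_of_fan htrue hmem (hall _ hmem)
  · intro hall σ hσ
    obtain ⟨I, J, rfl⟩ := (htrue.1.2.1 σ hσ).1
    have h1 := hall (G.phiCone Iᶜ Jᶜ) ⟨I, J, hσ, rfl⟩
    rw [G.fullDim_iff, ← G.indep_iff] at h1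
    exact G.psiSimplicial_of_indep h1
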